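/- For all α, β ∈ h and all m, n ∈ ℤ_+, the g-function is symmetric: g(α, m, β, n, x) = g(β, n, α, m, x). (Note that since ν is an isometry of h, one has ⟨β_(r), α⟩ = ⟨α_(−r), β⟩ = ⟨α_(p−r), β⟩ for all r; the asserted symmetry is nontrivial because, by the binomial expansion convention, (x_0−x_2)^{−2} ≠ (x_2−x_0)^{−2}.) -/

import Mathlib

noncomputable section

open scoped BigOperators

/-- Generalized binomial coefficient `z(z-1)⋯(z-k+1)/k!`. -/
def cbinom (z : ℂ) (k : ℕ) : ℂ :=
  (∏ j ∈ Finset.range k, (z - (j : ℂ))) / (k.factorial : ℂ)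

/-- Generalized binomial coefficient with integer lower index (zero for negative index). -/
def cbinomZ (z : ℂ) (k : ℤ) : ℂ := if 0 ≤ k then cbinom z k.toNat else 0

/-- The Heisenberg setting: a `d`-dimensional abelian Lie algebra `H` over `ℂ` (encoded
by an orthonormal spanning family `bas : Fin d → H`) with a nondegenerate symmetric
bilinear form `bil`, an isometry `nu` of period `p`, a primitive `p`-th root of unity
`ωp`, and the eigenspace projections `proj r : H → H_(r)` onto the `ωₚ^r`-eigenspaces of
`nu` (so that `proj` is `p`-periodic, the projections sum to the identity, and `nu` acts
as `ωₚ^r` on the range of `proj r`). -/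
structure HeisForm (p : ℕ) (H : Type) [AddCommGroup H] [Module ℂ H] where
  bil : H →ₗ[ℂ] H →ₗ[ℂ] ℂ
  bil_symm : ∀ α β : H, bil α β = bil β α
  bil_nondeg : ∀ α : H, (∀ β : H, bil α β = 0) → α = 0
  nu : H ≃ₗ[ℂ] H
  isom : ∀ α β : H, bil (nu α) (nu β) = bil α β
  period : nu ^ p = 1
  ωp : ℂ
  prim : IsPrimitiveRoot ωp p
  proj : ℤ → H →ₗ[ℂ] H
  proj_per : ∀ r : ℤ, proj (r + p) = proj r
  proj_sum : ∀ α : H, ∑ r ∈ Finset.range p, proj (r : ℤ) α = α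
  proj_eig : ∀ (r : ℤ) (α : H), nu (proj r α) = ωp ^ r • proj r α
  d : ℕ
  bas : Fin d → H
  bas_ortho : ∀ q q' : Fin d, bil (bas q) (bas q') = if q = q' then 1 else 0
  bas_span : Submodule.span ℂ (Set.range bas) = ⊤

variable {H : Type} [AddCommGroup H] [Module ℂ H]

/-- The coefficient of `x₀^a x₂^b x^c` in the formal series
`((x+x₂)/(x+x₀))^s (1 - s + s (x+x₀)/(x+x₂)) (x₀-x₂)^{-2}`,
where `(x+x₂)^s` (resp. `(x+x₀)^{-s}`, etc.) is expanded in nonnegative integral powers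
of `x₂` (resp. `x₀`), and `(x₀-x₂)^{-2}` in nonnegative integral powers of `x₂`. -/
def EEsum (s : ℂ) (a b : ℤ) : ℂ :=
  ∑ᶠ l : ℕ, ((l : ℂ) + 1) *
    ((1 - s) * cbinomZ s (b - l) * cbinomZ (-s) (a + 2 + l)
      + s * cbinomZ (s - 1) (b - l) * cbinomZ (1 - s) (a + 2 + l))

/-- The coefficient of `x₀^a x₂^b x^c` in
`((x+x₂)/(x+x₀))^s (1 - s + s (x+x₀)/(x+x₂)) (x₀-x₂)^{-2}`. -/
def EE (s : ℂ) (a b c : ℤ) : ℂ := if c = -(a + b + 2) then EEsum s a b else 0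

/-- The coefficient of `x₀^a x₂^b x^c` in the formal series
`∑_{r=1}^{p} ((x+x₂)/(x+x₀))^{r/p} (1 - r/p + (r/p)(x+x₀)/(x+x₂)) (x₀-x₂)^{-2} ⟨α_(r),β⟩`
appearing in the definition of the `g`-function. -/
def gCoeff (p : ℕ) (Hs : HeisForm p H) (α β : H) (a b c : ℤ) : ℂ :=
  if c = -(a + b + 2) then
    ∑ r ∈ Finset.Icc 1 p, Hs.bil (Hs.proj (r : ℤ) α) β * EEsum ((r : ℂ) / (p : ℂ)) a b
  else 0

/-- `g(α,m,β,n,x) = Res_{x₀} Res_{x₂} x₀^{-m} x₂^{-n} ∑_{r=1}^{p} (⋯)`: the residues pick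
the coefficients `a = m-1`, `b = n-1`, and the resulting series in `x` is the monomial
`gval ⋅ x^{-m-n}`. -/
def gval (p : ℕ) (Hs : HeisForm p H) (α : H) (m : ℤ) (β : H) (n : ℤ) : ℂ :=
  gCoeff p Hs α β (m - 1) (n - 1) (-(m + n))

/-!
After the residues, the coefficient of `g(α,m,β,n,x)` is `∑_{r=1}^p ⟨α_(r),β⟩ E_{r/p}(m-1,n-1)`,
with `E_s(a,b)` the coefficient of `x₀^a x₂^b` in
`((x+x₂)/(x+x₀))^s (1-s+s(x+x₀)/(x+x₂)) (x₀-x₂)^{-2}`.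
The heart of the matter is the identity `E_s(a,b) = E_{1-s}(b,a)` for `a, b ≥ 0`. If `c_s(i,j)`
are the coefficients of the numerator, then `E_s(a,b)` and `-E_{1-s}(b,a)` are the two tails
`i ≤ b` and `i ≥ b+2` of `∑_{i+j=a+b+2} (b+1-i) c_s(i,j)`, which vanishes by Chu–Vandermonde:
the two products in `c_s` collapse to `binom(0, a+b+2) = 0`, and their `i`-weighted versions to
`±s(1-s) binom(-1, a+b+1)`.
Since `ν` is an isometry, `⟨β_(r),α⟩ = ⟨α_(p-r),β⟩`, so `r ↦ p-r` matches the two sums;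
the boundary terms `r = 0, p` do not matter since `E_0 = E_1 = 0`.
-/

open Finset

theorem cbinom_eq_choose (z : ℂ) (k : ℕ) : cbinom z k = Ring.choose z k := by
  rw [Ring.choose_eq_smul, ← Polynomial.aeval_eq_smeval, Polynomial.aeval_def,
    ← Polynomial.eval_map, descPochhammer_map, descPochhammer_eval_eq_prod_range, cbinom,
    smul_eq_mul, div_eq_inv_mul]

theorem Ring.succ_mul_choose_succ {R : Type*} [CommRing R] [BinomialRing R] (z : R) (k : ℕ) :
    ((k : R) + 1) * Ring.choose z (k + 1) = z * Ring.choose (z - 1) k := by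
  have h := Ring.choose_smul_choose z (Nat.le_add_left 1 k)
  simpa [Ring.choose_one_right, Nat.cast_add] using h

theorem Ring.sum_antidiagonal_mul_choose_mul_choose {R : Type*} [CommRing R] [BinomialRing R]
    (x y : R) (n : ℕ) :
    ∑ ij ∈ antidiagonal (n + 1), (ij.1 : R) * (Ring.choose x ij.1 * Ring.choose y ij.2) =
      x * Ring.choose (x - 1 + y) n := by
  rw [Nat.sum_antidiagonal_succ, Ring.add_choose_eq _ (Commute.all _ _), mul_sum]
  simp only [Nat.cast_zero, zero_mul, zero_add, Nat.cast_add, Nat.cast_one]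
  refine sum_congr rfl fun ij _ => ?_
  rw [← mul_assoc, Ring.succ_mul_choose_succ, mul_assoc]

/-- The coefficient of `x₂^i x₀^j x^{-i-j}` in `((x+x₂)/(x+x₀))^s (1 - s + s (x+x₀)/(x+x₂))`. -/
def EEcoeff (s : ℂ) (i j : ℕ) : ℂ :=
  (1 - s) * Ring.choose s i * Ring.choose (-s) j + s * Ring.choose (s - 1) i * Ring.choose (1 - s) j

theorem EEcoeff_one_sub (s : ℂ) (i j : ℕ) : EEcoeff (1 - s) j i = EEcoeff s i j := by
  simp only [EEcoeff, sub_sub_cancel, neg_sub, sub_sub_cancel_left]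
  ring

theorem sum_range_sub_mul_EEcoeff_eq_zero (s c : ℂ) (n : ℕ) :
    ∑ k ∈ range (n + 2), (c - k) * EEcoeff s k (n + 1 - k) = 0 := by
  have hsum : ∑ ij ∈ antidiagonal (n + 1), EEcoeff s ij.1 ij.2 = 0 := by
    have v₁ := Ring.add_choose_eq (n + 1) (Commute.all s (-s))
    have v₂ := Ring.add_choose_eq (n + 1) (Commute.all (s - 1) (1 - s))
    rw [add_neg_cancel, Ring.choose_zero_succ] at v₁
    rw [sub_add_sub_cancel', sub_self, Ring.choose_zero_succ] at v₂
    simp only [EEcoeff, sum_add_distrib, mul_assoc, ← mul_sum, ← v₁, ← v₂, mul_zero, add_zero]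
  have hweighted : ∑ ij ∈ antidiagonal (n + 1), (ij.1 : ℂ) * EEcoeff s ij.1 ij.2 = 0 := by
    have w₁ := Ring.sum_antidiagonal_mul_choose_mul_choose s (-s) n
    have w₂ := Ring.sum_antidiagonal_mul_choose_mul_choose (s - 1) (1 - s) n
    rw [show s - 1 + -s = -1 by ring] at w₁
    rw [show s - 1 - 1 + (1 - s) = -1 by ring] at w₂
    calc ∑ ij ∈ antidiagonal (n + 1), (ij.1 : ℂ) * EEcoeff s ij.1 ij.2
        = (1 - s) * ∑ ij ∈ antidiagonal (n + 1),
            (ij.1 : ℂ) * (Ring.choose s ij.1 * Ring.choose (-s) ij.2)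
          + s * ∑ ij ∈ antidiagonal (n + 1),
            (ij.1 : ℂ) * (Ring.choose (s - 1) ij.1 * Ring.choose (1 - s) ij.2) := by
          simp only [mul_sum, ← sum_add_distrib, EEcoeff]
          exact sum_congr rfl fun _ _ => by ring
      _ = 0 := by rw [w₁, w₂]; ring
  calc ∑ k ∈ range (n + 2), (c - k) * EEcoeff s k (n + 1 - k)
      = ∑ ij ∈ antidiagonal (n + 1), (c - ij.1) * EEcoeff s ij.1 ij.2 :=
        (Nat.sum_antidiagonal_eq_sum_range_succ (fun i j => (c - i) * EEcoeff s i j) (n + 1)).symm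
    _ = c * ∑ ij ∈ antidiagonal (n + 1), EEcoeff s ij.1 ij.2
          - ∑ ij ∈ antidiagonal (n + 1), (ij.1 : ℂ) * EEcoeff s ij.1 ij.2 := by
        simp only [sub_mul, sum_sub_distrib, mul_sum]
    _ = 0 := by rw [hsum, hweighted, mul_zero, sub_zero]

theorem sum_range_sub_mul_eq_sub {R : Type*} [CommRing R] (f : ℕ → R) (K M : ℕ) :
    ∑ k ∈ range (K + M + 3), ((K : R) + 1 - k) * f k =
      ∑ l ∈ range (K + 1), ((l : R) + 1) * f (K - l)
        - ∑ l ∈ range (M + 1), ((l : R) + 1) * f (K + 2 + l) := by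
  have hlow : ∑ k ∈ range (K + 1), ((K : R) + 1 - k) * f k =
      ∑ l ∈ range (K + 1), ((l : R) + 1) * f (K - l) := by
    rw [← sum_range_reflect]
    refine sum_congr rfl fun l hl => ?_
    rw [add_tsub_cancel_right, Nat.cast_sub (Nat.lt_succ_iff.1 (mem_range.1 hl))]
    ring
  have hhigh : ∑ k ∈ range (M + 2), ((K : R) + 1 - (K + 1 + k : ℕ)) * f (K + 1 + k) =
      -∑ l ∈ range (M + 1), ((l : R) + 1) * f (K + 2 + l) := by
    rw [sum_range_succ', ← sum_neg_distrib]
    push_cast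
    simp only [add_zero, sub_self, zero_mul]
    refine sum_congr rfl fun l _ => ?_
    rw [show K + 1 + (l + 1) = K + 2 + l by ring]
    ring
  rw [show K + M + 3 = K + 1 + (M + 2) by ring, sum_range_add, hlow, hhigh, sub_eq_add_neg]

theorem EEsum_eq (s : ℂ) (M K : ℕ) :
    EEsum s M K = ∑ l ∈ range (K + 1), ((l : ℂ) + 1) * EEcoeff s (K - l) (M + 2 + l) := by
  rw [EEsum, finsum_eq_sum_of_support_subset _ (s := range (K + 1))]
  · refine sum_congr rfl fun l hl => ?_
    have hl : l ≤ K := Nat.lt_succ_iff.1 (mem_range.1 hl)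
    rw [EEcoeff, ← Nat.cast_sub hl, show (M : ℤ) + 2 + l = ((M + 2 + l : ℕ) : ℤ) by push_cast; ring]
    simp only [cbinomZ, Nat.cast_nonneg, if_true, Int.toNat_natCast, cbinom_eq_choose]
  · intro l hl
    by_contra hmem
    have hneg : (K : ℤ) - l < 0 := by simp only [coe_range, Set.mem_Iio] at hmem; omega
    simp only [Function.mem_support, cbinomZ, if_neg (not_le.2 hneg), mul_zero, zero_mul,
      add_zero, ne_eq, not_true_eq_false] at hl

theorem EEsum_symm (s : ℂ) (M K : ℕ) : EEsum s M K = EEsum (1 - s) K M := by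
  have h := sum_range_sub_mul_EEcoeff_eq_zero s ((K : ℂ) + 1) (K + M + 1)
  rw [show K + M + 1 + 2 = K + M + 3 by ring,
    sum_range_sub_mul_eq_sub (fun k => EEcoeff s k (K + M + 1 + 1 - k))] at h
  rw [EEsum_eq, EEsum_eq, ← sub_eq_zero, ← h]
  congr 1 <;> refine sum_congr rfl fun l hl => ?_
  · have hl : l ≤ K := Nat.lt_succ_iff.1 (mem_range.1 hl)
    rw [show K + M + 1 + 1 - (K - l) = M + 2 + l by omega]
  · rw [EEcoeff_one_sub, show K + M + 1 + 1 - (K + 2 + l) = M - l by omega]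

theorem EEsum_one (M K : ℕ) : EEsum 1 M K = 0 := by
  simp [EEsum_eq, EEcoeff, Ring.choose_zero_succ, show ∀ l, M + 2 + l = (M + 1 + l) + 1 by omega]

theorem EEsum_zero (M K : ℕ) : EEsum 0 M K = 0 := by
  rw [EEsum_symm, sub_zero, EEsum_one]

theorem sum_Icc_one_reflect {M : Type*} [AddCancelCommMonoid M] (f : ℕ → M) {p : ℕ}
    (h : f 0 = f p) : ∑ r ∈ Icc 1 p, f (p - r) = ∑ r ∈ Icc 1 p, f r := by
  have hsplit (g : ℕ → M) : ∑ r ∈ range (p + 1), g r = ∑ r ∈ Icc 1 p, g r + g 0 := by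
    rw [range_eq_Ico, sum_eq_sum_Ico_succ_bot (Nat.succ_pos p), add_comm, zero_add,
      Nat.succ_eq_add_one, Ico_add_one_right_eq_Icc]
  have hreflect := sum_range_reflect f (p + 1)
  rw [add_tsub_cancel_right, hsplit (fun r => f (p - r)), hsplit, Nat.sub_zero, ← h] at hreflect
  exact add_right_cancel hreflect

namespace HeisForm

variable {p : ℕ} (Hs : HeisForm p H)

theorem proj_eq_of_dvd_sub {r t : ℤ} (h : (p : ℤ) ∣ r - t) : Hs.proj r = Hs.proj t := by
  obtain ⟨q, hq⟩ := h
  rw [show r = t + q * p by linear_combination hq]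
  exact (Function.Periodic.int_mul Hs.proj_per q) t

theorem bil_proj_proj_eq_zero (hp : 0 < p) {r t : ℤ} (h : ¬(p : ℤ) ∣ r + t) (α β : H) :
    Hs.bil (Hs.proj r α) (Hs.proj t β) = 0 := by
  have hω : Hs.ωp ^ r * Hs.ωp ^ t ≠ 1 := by
    rw [← zpow_add₀ (Hs.prim.ne_zero hp.ne')]
    exact fun h1 => h ((Hs.prim.zpow_eq_one_iff_dvd _).1 h1)
  have hiso := Hs.isom (Hs.proj r α) (Hs.proj t β)
  simp only [Hs.proj_eig, map_smul, LinearMap.smul_apply, smul_eq_mul] at hiso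
  have hfac : (Hs.ωp ^ r * Hs.ωp ^ t - 1) * Hs.bil (Hs.proj r α) (Hs.proj t β) = 0 := by
    linear_combination hiso
  exact (mul_eq_zero.1 hfac).resolve_left (sub_ne_zero.2 hω)

theorem bil_proj_eq_bil_proj_proj_neg (hp : 0 < p) (r : ℤ) (γ α : H) :
    Hs.bil (Hs.proj r γ) α = Hs.bil (Hs.proj r γ) (Hs.proj (-r) α) := by
  have hp' : (0 : ℤ) < p := by exact_mod_cast hp
  set t₀ : ℕ := ((-r) % p).toNat
  have ht₀ : (t₀ : ℤ) = (-r) % p := Int.toNat_of_nonneg (Int.emod_nonneg _ hp'.ne')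
  have ht₀p : (t₀ : ℤ) < p := ht₀ ▸ Int.emod_lt_of_pos _ hp'
  conv_lhs => rw [← Hs.proj_sum α, map_sum]
  rw [sum_eq_single_of_mem t₀ (mem_range.2 (by omega))]
  · rw [Hs.proj_eq_of_dvd_sub (r := t₀) (t := -r) (ht₀ ▸ (Int.mod_modEq (-r) p).symm.dvd)]
  · intro t ht hne
    refine Hs.bil_proj_proj_eq_zero hp (fun hdvd => hne ?_) γ α
    have hmod : (t : ℤ) % p = (-r) % p :=
      Int.modEq_iff_dvd.2 (by rw [show -r - t = -(r + t) by ring]; exact hdvd.neg_right)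
    rw [Int.emod_eq_of_lt (Int.natCast_nonneg t) (by exact_mod_cast mem_range.1 ht)] at hmod
    omega

theorem bil_proj_eq_bil_proj_neg (hp : 0 < p) (r : ℤ) (α β : H) :
    Hs.bil (Hs.proj r β) α = Hs.bil (Hs.proj (-r) α) β := by
  rw [Hs.bil_proj_eq_bil_proj_proj_neg hp r β α, Hs.bil_symm,
    Hs.bil_proj_eq_bil_proj_proj_neg hp (-r) α β, neg_neg]

end HeisForm

/-- symmetry of the `g`-function, equation (5.8).  For `m, n ∈ ℤ₊`,
`g(α,m,β,n,x) = g(β,n,α,m,x)`, stated as the equality of the coefficients of each power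
`x^c` of the two series (obtained from `gCoeff` by taking the residues
`Res_{x₀} Res_{x₂} x₀^{-m} x₂^{-n}`, i.e. the coefficients `a = m-1`, `b = n-1`). -/
theorem statement14 {H : Type} [AddCommGroup H] [Module ℂ H]
    (p : ℕ) (hp : 0 < p) (Hs : HeisForm p H)
    (α β : H) (m n : ℤ) (hm : 1 ≤ m) (hn : 1 ≤ n) :
    ∀ c : ℤ, gCoeff p Hs α β (m - 1) (n - 1) c = gCoeff p Hs β α (n - 1) (m - 1) c := by
  intro c
  obtain ⟨M, rfl⟩ : ∃ M : ℕ, m = M + 1 := ⟨(m - 1).toNat, by omega⟩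
  obtain ⟨K, rfl⟩ : ∃ K : ℕ, n = K + 1 := ⟨(n - 1).toNat, by omega⟩
  simp only [gCoeff, add_sub_cancel_right, add_comm (K : ℤ) M]
  congr 1
  have hp' : (p : ℂ) ≠ 0 := Nat.cast_ne_zero.2 hp.ne'
  set F : ℕ → ℂ := fun t => Hs.bil (Hs.proj t α) β * EEsum ((t : ℂ) / p) M K
  have hterm : ∀ r ∈ Icc 1 p, Hs.bil (Hs.proj r β) α * EEsum ((r : ℂ) / p) K M = F (p - r) := by
    intro r hr
    have hr : r ≤ p := (mem_Icc.1 hr).2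
    have hs : 1 - (r : ℂ) / p = ((p - r : ℕ) : ℂ) / p := by
      rw [Nat.cast_sub hr, sub_div, div_self hp']
    rw [Hs.bil_proj_eq_bil_proj_neg hp, EEsum_symm, hs,
      Hs.proj_eq_of_dvd_sub (t := ((p - r : ℕ) : ℤ)) ⟨-1, by push_cast [Nat.cast_sub hr]; ring⟩]
  have hF : F 0 = F p := by
    simp only [F, Nat.cast_zero, zero_div, EEsum_zero, div_self hp', EEsum_one, mul_zero]
  rw [sum_congr rfl hterm, sum_Icc_one_reflect F hF]
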